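/- Consider a 2-minded bidder: types are vectors θ' ∈ ℝ² of values for two bundles (the null assignment has value 0), and the allocation set is A = {(0,0), (1,0), (0,1)} ⊆ ℝ². Let θ ∈ ℝ² satisfy 0 < θ₁ < θ₂, and let F be the set of all implementable-with-payments rules f : ℝ² → A. Then H(θ, F) = {θ} ∪ {θ' ∈ ℝ² : θ'₁ < θ₁ and θ'₂ < θ₂ and θ'₂ − θ'₁ < θ₂ − θ₁}. In particular, a type that underbids on both bundles can fail to be harmless if it underbids relatively more on the preferred bundle, so preventing overbidding alone does not suffice for k = 2. -/

import Mathlib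

open Matrix BigOperators

/-- An allocation rule is implementable-with-payments if there is a payment rule
making truthful reporting optimal. -/
def Implementable (f : (Fin 2 → ℝ) → (Fin 2 → ℝ)) : Prop :=
  ∃ p : (Fin 2 → ℝ) → ℝ, ∀ θ θ' : Fin 2 → ℝ, f θ ⬝ᵥ θ - p θ ≥ f θ' ⬝ᵥ θ - p θ'

/-- Allocations for a 2-minded bidder: nothing, bundle 1, or bundle 2. -/
def allocSet : Set (Fin 2 → ℝ) := {![0, 0], ![1, 0], ![0, 1]}

/-!
Comparing truthful reporting at `θ` and at `θ'` gives monotonicity: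
`(f θ' - f θ) ⬝ᵥ θ ≤ (f θ' - f θ) ⬝ᵥ θ'`. Hence a report `θ' ≠ θ` is harmless as soon as every
upgrade `a → a'` that is strictly profitable at `θ` is worth strictly less at `θ'`.
Conversely, an upgrade worth at least as much at `θ'` yields a harmful rule: sell `a'` at the
price `(a' - a) ⬝ᵥ θ'` to every type except `θ` itself that values the upgrade at least that much.
For the 2-minded bidder with `0 < θ₁ < θ₂` the profitable upgrades are `0 → e₁`, `0 → e₂`
and `e₁ → e₂`, and they give the three inequalities.
-/

/-- The harmless set `H(θ, F)`, for `F` the implementable-with-payments rules into `A`. -/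
def harmlessSet (A : Set (Fin 2 → ℝ)) (θ : Fin 2 → ℝ) : Set (Fin 2 → ℝ) :=
  {θ' | ∀ f : (Fin 2 → ℝ) → (Fin 2 → ℝ), (∀ x, f x ∈ A) → Implementable f →
    f θ ⬝ᵥ θ ≥ f θ' ⬝ᵥ θ}

theorem Implementable.sub_dotProduct_le {f : (Fin 2 → ℝ) → (Fin 2 → ℝ)} (hf : Implementable f)
    (θ θ' : Fin 2 → ℝ) : (f θ' - f θ) ⬝ᵥ θ ≤ (f θ' - f θ) ⬝ᵥ θ' := by
  obtain ⟨p, hp⟩ := hf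
  have h₁ := hp θ θ'
  have h₂ := hp θ' θ
  simp only [sub_dotProduct]
  linarith

theorem implementable_piecewise (a a' : Fin 2 → ℝ) (c : ℝ) (S : Set (Fin 2 → ℝ))
    [∀ x, Decidable (x ∈ S)] (hS : ∀ x ∈ S, c ≤ (a' - a) ⬝ᵥ x)
    (hSc : ∀ x ∉ S, (a' - a) ⬝ᵥ x ≤ c) :
    Implementable (S.piecewise (fun _ => a') (fun _ => a)) := by
  refine ⟨S.piecewise (fun _ => c) (fun _ => 0), fun x y => ?_⟩
  by_cases hxS : x ∈ S
  · have hx := hS x hxS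
    by_cases hyS : y ∈ S <;>
      simp only [Set.piecewise, hxS, hyS, ↓reduceIte, sub_dotProduct] at hx ⊢ <;> linarith
  · have hx := hSc x hxS
    by_cases hyS : y ∈ S <;>
      simp only [Set.piecewise, hxS, hyS, ↓reduceIte, sub_dotProduct] at hx ⊢ <;> linarith

theorem mem_harmlessSet_iff (A : Set (Fin 2 → ℝ)) (θ θ' : Fin 2 → ℝ) :
    θ' ∈ harmlessSet A θ ↔ θ' = θ ∨
      ∀ a ∈ A, ∀ a' ∈ A, a ⬝ᵥ θ < a' ⬝ᵥ θ → (a' - a) ⬝ᵥ θ' < (a' - a) ⬝ᵥ θ := by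
  classical
  constructor
  · intro hθ'
    by_contra! hbad
    obtain ⟨hne, a, ha, a', ha', hlt, hle⟩ := hbad
    set S := {x | (a' - a) ⬝ᵥ θ' ≤ (a' - a) ⬝ᵥ x} \ {θ}
    have himpl : Implementable (S.piecewise (fun _ => a') (fun _ => a)) := by
      refine implementable_piecewise a a' _ S (fun x hx => hx.1) fun x hx => ?_
      by_cases hxθ : x = θ
      · rw [hxθ]; exact hle
      · by_contra! h
        exact hx ⟨h.le, hxθ⟩
    have hθS : θ ∉ S := fun h => h.2 rfl
    have hθ'S : θ' ∈ S := ⟨le_refl ((a' - a) ⬝ᵥ θ'), hne⟩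
    have := hθ' _ (fun x => by by_cases hx : x ∈ S <;> simp [hx, ha, ha']) himpl
    simp only [Set.piecewise_eq_of_mem _ _ _ hθ'S, Set.piecewise_eq_of_notMem _ _ _ hθS] at this
    linarith
  · rintro (rfl | hgap) f hfA hf
    · exact le_rfl
    by_contra! hlt
    have := hf.sub_dotProduct_le θ θ'
    linarith [hgap _ (hfA θ) _ (hfA θ') hlt]

theorem allocSet_gain_lt_iff (θ θ' : Fin 2 → ℝ) (h0 : 0 < θ 0) (h01 : θ 0 < θ 1) :
    (∀ a ∈ allocSet, ∀ a' ∈ allocSet, a ⬝ᵥ θ < a' ⬝ᵥ θ → (a' - a) ⬝ᵥ θ' < (a' - a) ⬝ᵥ θ) ↔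
      θ' 0 < θ 0 ∧ θ' 1 < θ 1 ∧ θ' 1 - θ' 0 < θ 1 - θ 0 := by
  simp only [allocSet, Set.forall_mem_insert, Set.mem_singleton_iff, forall_eq, sub_dotProduct]
  have h1 : 0 < θ 1 := h0.trans h01
  simp [dotProduct, Fin.sum_univ_two, h0, h1, h01, not_lt.mpr h0.le, not_lt.mpr h1.le,
    not_lt.mpr h01.le, and_assoc]

/-- The `k = 2` combinatorial auction example: for a true type `θ` with
`0 < θ₁ < θ₂`, the harmless set of all implementable-with-payments rules into
`allocSet` is `θ` together with the types that underbid on both bundles while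
underbidding relatively less on the preferred bundle. -/
theorem harmless_two_minded (θ : Fin 2 → ℝ) (h0 : 0 < θ 0) (h01 : θ 0 < θ 1) :
    {θ' : Fin 2 → ℝ | ∀ f : (Fin 2 → ℝ) → (Fin 2 → ℝ),
        (∀ x, f x ∈ allocSet) → Implementable f → f θ ⬝ᵥ θ ≥ f θ' ⬝ᵥ θ} =
    {θ} ∪ {θ' : Fin 2 → ℝ |
        θ' 0 < θ 0 ∧ θ' 1 < θ 1 ∧ θ' 1 - θ' 0 < θ 1 - θ 0} := by
  change harmlessSet allocSet θ = _
  ext θ'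
  rw [mem_harmlessSet_iff, allocSet_gain_lt_iff θ θ' h0 h01]
  rfl
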